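/- arXiv:1607.04163 — 2 statements merged into one kernel-verified Lean document; each statement's English description precedes it below -/
import Mathlib

section
/- Let ρ : (0,∞) → ℝ be C² and define u_k(x) = ρ(|x|) x_k/|x| for k = 1,…,N. Then for all x ≠ 0: ∑_{k=1}^N |D²u_k(x)|² = ρ''(|x|)² + 3(N−1)(ρ(|x|) − |x| ρ'(|x|))²/|x|⁴. -/
/-!
With `a(r) = ρ(r)/r` we have `u_k(x) = a(|x|) x_k` away from the origin. Differentiating twice,
`∂_i ∂_j u_k(x) = c x_i x_j x_k + b (δ_ij x_k + δ_ik x_j + δ_jk x_i)` with `r = |x|`,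
`b = a'(r)/r` and `c = b'(r)/r`. Summing the squares over `i, j, k`, the Kronecker deltas collapse
the sums, leaving `c² r⁶ + 6 b c r⁴ + (3N + 6) b² r²`, which in terms of `ρ` is
`ρ''(r)² + 3(N - 1)(ρ(r) - r ρ'(r))² / r⁴`.
-/

/-- The squared Frobenius norm of the Hessian of `u : ℝ^N → ℝ` at `x`,
i.e. the sum of squares of the second partial derivatives. -/
noncomputable def hessFrobSq {N : ℕ} (u : EuclideanSpace ℝ (Fin N) → ℝ)
    (x : EuclideanSpace ℝ (Fin N)) : ℝ :=
  ∑ i, ∑ j,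
    (fderiv ℝ (fun y => fderiv ℝ u y (EuclideanSpace.single j 1)) x
       (EuclideanSpace.single i 1)) ^ 2

open Filter Topology Finset
open scoped RealInnerProductSpace

section Radial

variable {E : Type*} [NormedAddCommGroup E] [InnerProductSpace ℝ E]

theorem hasFDerivAt_norm_of_ne_zero {x : E} (hx : x ≠ 0) :
    HasFDerivAt (fun y : E => ‖y‖) (‖x‖⁻¹ • innerSL ℝ x) x := by
  have hsqrt : HasDerivAt Real.sqrt (2 * ‖x‖)⁻¹ (‖x‖ ^ 2) := by
    simpa [Real.sqrt_sq (norm_nonneg x)] using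
      Real.hasDerivAt_sqrt (pow_ne_zero 2 (norm_ne_zero_iff.mpr hx))
  have h := hsqrt.comp_hasFDerivAt x (hasStrictFDerivAt_norm_sq x).hasFDerivAt
  simp only [Function.comp_def, Real.sqrt_sq (norm_nonneg _)] at h
  refine h.congr_fderiv ?_
  rw [← Nat.cast_smul_eq_nsmul ℝ, smul_smul, mul_inv_rev, Nat.cast_ofNat,
    inv_mul_cancel_right₀ two_ne_zero]

theorem HasDerivAt.comp_norm {φ : ℝ → ℝ} {φ' : ℝ} {x : E} (hφ : HasDerivAt φ φ' ‖x‖)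
    (hx : x ≠ 0) : HasFDerivAt (fun y => φ ‖y‖) ((φ' / ‖x‖) • innerSL ℝ x) x := by
  refine (hφ.comp_hasFDerivAt x (hasFDerivAt_norm_of_ne_zero hx)).congr_fderiv ?_
  rw [smul_smul, div_eq_mul_inv]

theorem fderiv_comp_norm_mul_inner_apply {a : ℝ → ℝ} {a' : ℝ} {y : E}
    (ha : HasDerivAt a a' ‖y‖) (hy : y ≠ 0) (v w : E) :
    fderiv ℝ (fun z => a ‖z‖ * ⟪w, z⟫) y v = a' / ‖y‖ * (⟪y, v⟫ * ⟪w, y⟫) + a ‖y‖ * ⟪w, v⟫ := by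
  rw [HasFDerivAt.fderiv (by exact (ha.comp_norm hy).mul (innerSL ℝ w).hasFDerivAt)]
  simp only [add_apply, smul_apply, coe_innerSL_apply, smul_eq_mul]
  ring

theorem fderiv_fderiv_comp_norm_mul_inner_apply {a a' : ℝ → ℝ} {b' : ℝ} {x : E}
    (ha : ∀ r > 0, HasDerivAt a (a' r) r) (hb : HasDerivAt (fun r => a' r / r) b' ‖x‖)
    (hx : x ≠ 0) (u v w : E) :
    fderiv ℝ (fun y => fderiv ℝ (fun z => a ‖z‖ * ⟪w, z⟫) y v) x u
      = b' / ‖x‖ * (⟪x, u⟫ * ⟪x, v⟫ * ⟪x, w⟫)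
        + a' ‖x‖ / ‖x‖ * (⟪u, v⟫ * ⟪x, w⟫ + ⟪u, w⟫ * ⟪x, v⟫ + ⟪v, w⟫ * ⟪x, u⟫) := by
  have hfirst : (fun y => fderiv ℝ (fun z => a ‖z‖ * ⟪w, z⟫) y v) =ᶠ[𝓝 x]
      fun y => a' ‖y‖ / ‖y‖ * (⟪v, y⟫ * ⟪w, y⟫) + a ‖y‖ * ⟪w, v⟫ := by
    filter_upwards [isOpen_ne.mem_nhds hx] with y hy
    rw [fderiv_comp_norm_mul_inner_apply (ha _ (norm_pos_iff.mpr hy)) hy v w, real_inner_comm]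
  have hsecond := ((hb.comp_norm hx).mul
      (((innerSL ℝ v).hasFDerivAt (x := x)).mul (innerSL ℝ w).hasFDerivAt)).add
    (((ha _ (norm_pos_iff.mpr hx)).comp_norm hx).mul_const ⟪w, v⟫)
  rw [hfirst.fderiv_eq, HasFDerivAt.fderiv (by exact hsecond)]
  simp only [coe_innerSL_apply, real_inner_comm, smul_add, Pi.mul_apply,
    add_apply, smul_apply, smul_eq_mul]
  ring

end Radial

theorem HasDerivAt.div_id {f : ℝ → ℝ} {f' r : ℝ} (hf : HasDerivAt f f' r) (hr : r ≠ 0) :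
    HasDerivAt (fun s => f s / s) ((f' - f r / r) / r) r :=
  (hf.div (hasDerivAt_id r) hr).congr_deriv (by simp only [id_eq, mul_one]; field_simp)

theorem sum_sq_radial_hessian {ι : Type*} [Fintype ι] [DecidableEq ι] (x : ι → ℝ) (c b : ℝ) :
    ∑ k, ∑ i, ∑ j, (c * (x i * x j * x k)
      + b * ((if i = j then x k else 0) + (if i = k then x j else 0)
             + (if j = k then x i else 0))) ^ 2
    = c ^ 2 * (∑ i, x i ^ 2) ^ 3 + 6 * c * b * (∑ i, x i ^ 2) ^ 2
      + (3 * Fintype.card ι + 6) * b ^ 2 * (∑ i, x i ^ 2) := by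
  simp only [add_sq, mul_pow, add_mul, mul_add, ite_pow, ite_mul, mul_ite, zero_pow two_ne_zero,
    mul_zero, zero_mul, sum_add_distrib, sum_ite_irrel, sum_const_zero, sum_ite_eq, sum_ite_eq',
    mem_univ, if_true, ← sum_mul, ← mul_sum]
  ring_nf
  simp only [← sum_mul, ← mul_sum, sum_const, card_univ, nsmul_eq_mul]
  ring

theorem hessFrobSq_congr {N : ℕ} {u v : EuclideanSpace ℝ (Fin N) → ℝ}
    {x : EuclideanSpace ℝ (Fin N)} (h : u =ᶠ[𝓝 x] v) : hessFrobSq u x = hessFrobSq v x := by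
  unfold hessFrobSq
  refine sum_congr rfl fun i _ => sum_congr rfl fun j _ => ?_
  have hdir : (fun y => fderiv ℝ u y (EuclideanSpace.single j 1)) =ᶠ[𝓝 x]
      fun y => fderiv ℝ v y (EuclideanSpace.single j 1) :=
    h.fderiv.mono fun y hy => DFunLike.congr_fun hy _
  rw [hdir.fderiv_eq]

theorem hessFrobSq_comp_norm_mul_coord {N : ℕ} {a a' : ℝ → ℝ} {b' : ℝ}
    {x : EuclideanSpace ℝ (Fin N)} (ha : ∀ r > 0, HasDerivAt a (a' r) r)
    (hb : HasDerivAt (fun r => a' r / r) b' ‖x‖) (hx : x ≠ 0) (k : Fin N) :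
    hessFrobSq (fun z => a ‖z‖ * z k) x
      = ∑ i, ∑ j, (b' / ‖x‖ * (x i * x j * x k)
          + a' ‖x‖ / ‖x‖ * ((if i = j then x k else 0) + (if i = k then x j else 0)
             + (if j = k then x i else 0))) ^ 2 := by
  have hcoord : (fun z : EuclideanSpace ℝ (Fin N) => a ‖z‖ * z k)
      = fun z => a ‖z‖ * ⟪EuclideanSpace.single k 1, z⟫ := by
    simp [EuclideanSpace.inner_single_left]
  rw [hessFrobSq, hcoord]
  simp only [fderiv_fderiv_comp_norm_mul_inner_apply ha hb hx]
  simp [EuclideanSpace.inner_single_right, eq_comm]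

theorem stmt_8_general (N : ℕ) (rho rho' rho'' : ℝ → ℝ)
    (hd : ∀ r > (0:ℝ), HasDerivAt rho (rho' r) r)
    (hd2 : ∀ r > (0:ℝ), HasDerivAt rho' (rho'' r) r)
    (u : Fin N → EuclideanSpace ℝ (Fin N) → ℝ)
    (hu : ∀ k, ∀ x ≠ 0, u k x = rho ‖x‖ * x k / ‖x‖) :
    ∀ x : EuclideanSpace ℝ (Fin N), x ≠ 0 →
      ∑ k, hessFrobSq (u k) x
        = rho'' ‖x‖ ^ 2
          + 3 * ((N : ℝ) - 1) * (rho ‖x‖ - ‖x‖ * rho' ‖x‖) ^ 2 / ‖x‖ ^ 4 := by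
  intro x hx
  have hxpos : 0 < ‖x‖ := norm_pos_iff.mpr hx
  have ha : ∀ r > 0, HasDerivAt (fun r => rho r / r) ((rho' r - rho r / r) / r) r :=
    fun r hr => (hd r hr).div_id hr.ne'
  have hb : HasDerivAt (fun r => (rho' r - rho r / r) / r / r) _ ‖x‖ :=
    (((hd2 _ hxpos).sub ((hd _ hxpos).div_id hxpos.ne')).div_id hxpos.ne').div_id hxpos.ne'
  have hloc : ∀ k, u k =ᶠ[𝓝 x] fun z => rho ‖z‖ / ‖z‖ * z k := fun k => by
    filter_upwards [isOpen_ne.mem_nhds hx] with z hz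
    rw [hu k z hz, mul_div_right_comm]
  have hnorm : ∑ i, x i ^ 2 = ‖x‖ ^ 2 := by
    simp [EuclideanSpace.norm_sq_eq]
  rw [sum_congr rfl fun k _ =>
      (hessFrobSq_congr (hloc k)).trans (hessFrobSq_comp_norm_mul_coord ha hb hx k),
    sum_sq_radial_hessian, hnorm, Fintype.card_fin, Pi.sub_apply]
  field_simp
  ring

/-- With `u_k(x) = ρ(|x|) x_k/|x|`, for `x ≠ 0`:
`∑_k |D²u_k(x)|² = ρ''(|x|)² + 3(N−1)(ρ(|x|) − |x|ρ'(|x|))²/|x|⁴`. -/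
theorem stmt_8 (N : ℕ) (hN : 2 ≤ N) (rho rho' rho'' : ℝ → ℝ)
    (hrho : ContDiff ℝ 2 rho)
    (hd : ∀ r > (0:ℝ), HasDerivAt rho (rho' r) r)
    (hd2 : ∀ r > (0:ℝ), HasDerivAt rho' (rho'' r) r)
    (u : Fin N → EuclideanSpace ℝ (Fin N) → ℝ)
    (hu : ∀ k, ∀ x ≠ 0, u k x = rho ‖x‖ * x k / ‖x‖) :
    ∀ x : EuclideanSpace ℝ (Fin N), x ≠ 0 →
      ∑ k, hessFrobSq (u k) x
        = rho'' ‖x‖ ^ 2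
          + 3 * ((N : ℝ) - 1) * (rho ‖x‖ - ‖x‖ * rho' ‖x‖) ^ 2 / ‖x‖ ^ 4 :=
  stmt_8_general N rho rho' rho'' hd hd2 u hu
end

section
/- Let ξ be a function on ℝ^N of the form ξ(x) = ρ(|x|)(a·x)/|x| for some a ∈ ℝ^N and a C² radial profile ρ with ρ(1), ρ'(1) well-defined. Then for x ∈ ∂B (|x| = 1), the quantity |D²ξ(x)|² + τ|Dξ(x)|² restricted to ∂B equals P(1) + Q(1)(a·x)² for constants P(1), Q(1) depending only on ρ(1), ρ'(1), ρ''(1), τ, N; in particular if ψ ∈ C^∞(∂B) satisfies ∫_{∂B} ψ dσ = 0 and ∫_{∂B}(b·x)²ψ dσ = 0 for all b ∈ ℝ^N, then ∫_{∂B} ψ (|D²ξ|² + τ|Dξ|²) dσ = 0. -/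
open MeasureTheory Metric

/-- Squared Euclidean norm of the gradient of `u` at `x`. -/
noncomputable def gradSq {N : ℕ} (u : EuclideanSpace ℝ (Fin N) → ℝ)
    (x : EuclideanSpace ℝ (Fin N)) : ℝ :=
  ∑ i, (fderiv ℝ u x (EuclideanSpace.single i 1)) ^ 2

namespace Stmt19Aux

open Module

variable {N : ℕ}



lemma sum_expand (c d : ℝ) (u v : Fin N → ℝ) :
    ∑ j, (c * u j + d * v j)^2
      = c^2 * (∑ j, u j^2) + 2*c*d*(∑ j, u j * v j) + d^2 * (∑ j, v j^2) := by
  rw [Finset.mul_sum, Finset.mul_sum, Finset.mul_sum, ← Finset.sum_add_distrib,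
    ← Finset.sum_add_distrib]
  exact Finset.sum_congr rfl fun j _ => by ring

lemma algebra1 (c0 c1 t : ℝ) (xv av : Fin N → ℝ) (hS : ∑ i, xv i^2 = 1)
    (hT : ∑ i, av i * xv i = t) :
    ∑ i, (c0 * av i + (c1 * t) * xv i)^2
      = c0^2 * (∑ i, av i^2) + (2*c0*c1 + c1^2) * t^2 := by
  rw [sum_expand, hS, hT]; ring

lemma algebra2 (c1 c2 t : ℝ) (xv av : Fin N → ℝ) (hS : ∑ i, xv i^2 = 1)
    (hT : ∑ i, av i * xv i = t) :
    ∑ i, ∑ j, (c1 * xv i * av j + c1 * av i * xv j + c2*t*xv i*xv j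
        + c1*t*(if i = j then 1 else 0))^2
      = 2*c1^2*(∑ i, av i^2) + (c2^2 + 6*c1*c2 + (N+6)*c1^2)*t^2 := by
  have hB : ∀ i : Fin N, ∑ j, (c1 * xv i * av j + c1 * av i * xv j + c2*t*xv i*xv j
        + c1*t*(if i = j then 1 else 0))^2
      = (c1*xv i)^2 * (∑ j, av j^2) + 2*(c1*xv i)*(c1*av i + c2*t*xv i)*t
        + (c1*av i + c2*t*xv i)^2 * 1
        + (2*(c1*t)*((c1*xv i)*av i + (c1*av i + c2*t*xv i)*xv i) + (c1*t)^2) := by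
    intro i
    have h1 : ∀ j, (c1 * xv i * av j + c1 * av i * xv j + c2*t*xv i*xv j
          + c1*t*(if i = j then 1 else 0))^2
        = ((c1*xv i) * av j + (c1*av i + c2*t*xv i) * xv j)^2
          + (if i = j then 2*(c1*t)*((c1*xv i)*av j + (c1*av i + c2*t*xv i)*xv j)
              + (c1*t)^2 else 0) := by
      intro j; split_ifs <;> ring
    rw [Finset.sum_congr rfl fun j _ => h1 j, Finset.sum_add_distrib, sum_expand, hS, hT,
      Finset.sum_ite_eq Finset.univ i
        (fun j => 2*(c1*t)*((c1*xv i)*av j + (c1*av i + c2*t*xv i)*xv j) + (c1*t)^2)]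
    simp
  rw [Finset.sum_congr rfl fun i _ => hB i]
  set A := ∑ i, av i^2 with hA
  have h2 : ∀ i : Fin N, (c1*xv i)^2 * A + 2*(c1*xv i)*(c1*av i + c2*t*xv i)*t
        + (c1*av i + c2*t*xv i)^2 * 1
        + (2*(c1*t)*((c1*xv i)*av i + (c1*av i + c2*t*xv i)*xv i) + (c1*t)^2)
      = (c1^2*A + 4*c1*c2*t^2 + c2^2*t^2) * xv i^2 + c1^2 * av i^2
        + (6*c1^2*t + 2*c1*c2*t) * (av i * xv i) + c1^2*t^2 := by
    intro i; ring
  rw [Finset.sum_congr rfl fun i _ => h2 i, Finset.sum_add_distrib, Finset.sum_add_distrib,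
    Finset.sum_add_distrib, ← Finset.mul_sum, ← Finset.mul_sum, ← Finset.mul_sum, hS, hT,
    Finset.sum_const, Finset.card_univ, Fintype.card_fin, nsmul_eq_mul]
  ring

section DerivS

local notation "E" => EuclideanSpace ℝ (Fin N)

lemma derivs (a : E) (p p1 p2 : ℝ → ℝ)
    (hp : ∀ s > (0:ℝ), HasDerivAt p (p1 s) s)
    (hp1 : ∀ s > (0:ℝ), HasDerivAt p1 (p2 s) s)
    (xi : E → ℝ)
    (hxi : ∀ y : E, y ≠ 0 → xi y = p (‖y‖^2) * (inner ℝ a y : ℝ)) :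
    ∀ x : E, ‖x‖ = 1 →
      (∀ i, fderiv ℝ xi x (EuclideanSpace.single i 1)
          = p 1 * a i + 2 * p1 1 * (inner ℝ a x : ℝ) * x i) ∧
      (∀ i j, fderiv ℝ (fun y => fderiv ℝ xi y (EuclideanSpace.single j 1)) x
            (EuclideanSpace.single i 1)
          = 2 * p1 1 * x i * a j + 2 * p1 1 * a i * x j
            + 4 * p2 1 * (inner ℝ a x : ℝ) * x i * x j
            + 2 * p1 1 * (inner ℝ a x : ℝ) * (if i = j then 1 else 0)) := by
  -- first derivative as a function
  have hD : ∀ y : E, y ≠ 0 → HasFDerivAt xi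
      (p (‖y‖^2) • innerSL ℝ a +
        (inner ℝ a y : ℝ) • (p1 (‖y‖^2) • (2 • innerSL ℝ y))) y := by
    intro y hy
    have hs : (0:ℝ) < ‖y‖^2 := pow_pos (norm_pos_iff.mpr hy) 2
    have hnsq : HasFDerivAt (fun z : E => ‖z‖^2) (2 • innerSL ℝ y) y := by
      simpa using (hasFDerivAt_id y).norm_sq
    have h1 : HasFDerivAt (fun z : E => p (‖z‖^2)) (p1 (‖y‖^2) • (2 • innerSL ℝ y)) y :=
      (hp _ hs).comp_hasFDerivAt y hnsq
    have h2 : HasFDerivAt (fun z : E => (inner ℝ a z : ℝ)) (innerSL ℝ a) y :=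
      (innerSL ℝ a).hasFDerivAt
    have h3 := h1.mul h2
    have heq : (fun z : E => p (‖z‖^2) * (inner ℝ a z : ℝ)) =ᶠ[nhds y] xi := by
      filter_upwards [IsOpen.mem_nhds isOpen_compl_singleton hy] with z hz
      exact (hxi z hz).symm
    exact h3.congr_of_eventuallyEq heq.symm
  -- evaluation of the first derivative
  have hval : ∀ (y : E), y ≠ 0 → ∀ j, fderiv ℝ xi y (EuclideanSpace.single j 1)
      = p (‖y‖^2) * a j + (inner ℝ a y : ℝ) * (p1 (‖y‖^2) * (2 * y j)) := by
    intro y hy j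
    rw [(hD y hy).fderiv]
    simp [EuclideanSpace.inner_single_right, real_inner_smul_left, two_smul]
    ring
  intro x hx
  have hx0 : x ≠ 0 := by intro h; rw [h] at hx; simp at hx
  constructor
  · intro i
    rw [hval x hx0 i, hx]
    have : (inner ℝ x (EuclideanSpace.single i 1) : ℝ) = x i := by
      simp [EuclideanSpace.inner_single_right]
    ring
  · intro i j
    -- second derivative: the function y ↦ fderiv xi y (e j) agrees near x with G j
    have hG : (fun y : E => fderiv ℝ xi y (EuclideanSpace.single j 1))
        =ᶠ[nhds x] (fun y : E => p (‖y‖^2) * a j + (inner ℝ a y : ℝ) * (p1 (‖y‖^2) * (2 * y j))) := by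
      filter_upwards [IsOpen.mem_nhds isOpen_compl_singleton hx0] with z hz
      exact hval z hz j
    rw [hG.fderiv_eq]
    have hs : (0:ℝ) < ‖x‖^2 := pow_pos (norm_pos_iff.mpr hx0) 2
    have hnsq : HasFDerivAt (fun z : E => ‖z‖^2) (2 • innerSL ℝ x) x := by
      simpa using (hasFDerivAt_id x).norm_sq
    have h1 : HasFDerivAt (fun z : E => p (‖z‖^2)) (p1 (‖x‖^2) • (2 • innerSL ℝ x)) x :=
      (hp _ hs).comp_hasFDerivAt x hnsq
    have h1' : HasFDerivAt (fun z : E => p1 (‖z‖^2)) (p2 (‖x‖^2) • (2 • innerSL ℝ x)) x :=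
      (hp1 _ hs).comp_hasFDerivAt x hnsq
    have h2 : HasFDerivAt (fun z : E => (inner ℝ a z : ℝ)) (innerSL ℝ a) x :=
      (innerSL ℝ a).hasFDerivAt
    have hcoord : HasFDerivAt (fun z : E => (2:ℝ) * z j)
        ((2:ℝ) • (EuclideanSpace.proj j : E →L[ℝ] ℝ)) x := by
      exact ((EuclideanSpace.proj j : E →L[ℝ] ℝ).hasFDerivAt).const_mul 2
    have hbig := (h1.mul_const (a j)).add (h2.mul (h1'.mul hcoord))
    rw [(show HasFDerivAt (fun y : E => p (‖y‖^2) * a j + (inner ℝ a y : ℝ) * (p1 (‖y‖^2) * (2 * y j))) _ x from hbig).fderiv]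
    have e1 : (inner ℝ x (EuclideanSpace.single i 1) : ℝ) = x i := by
      simp [EuclideanSpace.inner_single_right]
    have e2 : (inner ℝ a (EuclideanSpace.single i 1) : ℝ) = a i := by
      simp [EuclideanSpace.inner_single_right]
    have e3 : (EuclideanSpace.proj j : E →L[ℝ] ℝ) (EuclideanSpace.single i 1)
        = if i = j then 1 else 0 := by
      simp [EuclideanSpace.single_apply, eq_comm]
    simp [real_inner_smul_left, two_smul, e1, e2, e3, hx]
    split_ifs <;> ring


-- sum of squares of coordinates
end DerivS

lemma sum_sq_eq_one {N : ℕ} (x : EuclideanSpace ℝ (Fin N)) (hx : ‖x‖ = 1) :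
    ∑ i, x i ^ 2 = 1 := by
  have h := EuclideanSpace.norm_eq x
  rw [hx] at h
  have h2 : Real.sqrt (∑ i, x i^2) = 1 := by
    rw [← h.symm]
    congr 1
    exact Finset.sum_congr rfl fun i _ => by rw [Real.norm_eq_abs, sq_abs]
  exact Real.sqrt_eq_one.mp h2

lemma lip_radial {N : ℕ} :
    LipschitzOnWith 2 (fun z : EuclideanSpace ℝ (Fin N) => ‖z‖⁻¹ • z)
      {z : EuclideanSpace ℝ (Fin N) | 1 ≤ ‖z‖} := by
  apply LipschitzOnWith.of_dist_le_mul
  intro u hu w hw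
  simp only [Set.mem_setOf_eq] at hu hw
  have hA : (0:ℝ) < ‖u‖ := lt_of_lt_of_le one_pos hu
  have hB : (0:ℝ) < ‖w‖ := lt_of_lt_of_le one_pos hw
  rw [dist_eq_norm, dist_eq_norm]
  have key : ‖u‖⁻¹ • u - ‖w‖⁻¹ • w = ‖u‖⁻¹ • (u - w) + (‖u‖⁻¹ - ‖w‖⁻¹) • w := by
    rw [smul_sub, sub_smul]; abel
  rw [key]
  have h1 : ‖‖u‖⁻¹ • (u - w)‖ ≤ ‖u - w‖ := by
    rw [norm_smul, Real.norm_eq_abs, abs_of_pos (inv_pos.mpr hA)]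
    calc ‖u‖⁻¹ * ‖u - w‖ ≤ 1 * ‖u - w‖ := by
          apply mul_le_mul_of_nonneg_right _ (norm_nonneg _)
          exact inv_le_one_of_one_le₀ hu
      _ = ‖u - w‖ := one_mul _
  have h2 : ‖(‖u‖⁻¹ - ‖w‖⁻¹) • w‖ ≤ ‖u - w‖ := by
    rw [norm_smul, Real.norm_eq_abs]
    have e1 : ‖u‖⁻¹ - ‖w‖⁻¹ = (‖w‖ - ‖u‖) / (‖u‖ * ‖w‖) := by field_simp
    rw [e1, abs_div, abs_of_pos (mul_pos hA hB), div_mul_eq_mul_div]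
    have e2 : |‖w‖ - ‖u‖| * ‖w‖ ≤ ‖u - w‖ * (‖u‖ * ‖w‖) := by
      have h3 : |‖w‖ - ‖u‖| ≤ ‖u - w‖ := by
        rw [abs_sub_comm]; exact abs_norm_sub_norm_le u w
      calc |‖w‖ - ‖u‖| * ‖w‖ ≤ ‖u - w‖ * ‖w‖ :=
            mul_le_mul_of_nonneg_right h3 (norm_nonneg _)
        _ ≤ ‖u - w‖ * (‖u‖ * ‖w‖) := by
            apply mul_le_mul_of_nonneg_left _ (norm_nonneg _)
            nlinarith

    rw [div_le_iff₀ (mul_pos hA hB)]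
    exact e2
  calc ‖‖u‖⁻¹ • (u - w) + (‖u‖⁻¹ - ‖w‖⁻¹) • w‖
      ≤ ‖‖u‖⁻¹ • (u - w)‖ + ‖(‖u‖⁻¹ - ‖w‖⁻¹) • w‖ := norm_add_le _ _
    _ ≤ ‖u - w‖ + ‖u - w‖ := add_le_add h1 h2
    _ = 2 * ‖u - w‖ := by ring

lemma sphere_hausdorff_lt_top (N : ℕ) (hN : 2 ≤ N) :
    μH[(N:ℝ)-1] (sphere (0 : EuclideanSpace ℝ (Fin N)) 1) < ⊤ := by
  classical
  set d : ℝ := (N:ℝ) - 1 with hd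
  have hd0 : 0 ≤ d := by
    have : (2:ℝ) ≤ N := by exact_mod_cast hN
    simp only [hd]; linarith
  set V : Fin N → Submodule ℝ (EuclideanSpace ℝ (Fin N)) := fun i => (ℝ ∙ (EuclideanSpace.single i 1 : (EuclideanSpace ℝ (Fin N))))ᗮ with hV
  set c : Fin N × Bool → (EuclideanSpace ℝ (Fin N)) := fun q => (if q.2 then (1:ℝ) else -1) • EuclideanSpace.single q.1 1
    with hc
  set F : Fin N × Bool → Set (EuclideanSpace ℝ (Fin N)) :=
    fun q => (fun v : V q.1 => (v : (EuclideanSpace ℝ (Fin N))) + c q) '' (closedBall 0 (N+1)) with hF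
  set S : Set (EuclideanSpace ℝ (Fin N)) := {z : (EuclideanSpace ℝ (Fin N)) | 1 ≤ ‖z‖} with hS
  set h : (EuclideanSpace ℝ (Fin N)) → (EuclideanSpace ℝ (Fin N)) := fun z => ‖z‖⁻¹ • z with hh
  have cover : sphere (0:(EuclideanSpace ℝ (Fin N))) 1 ⊆ ⋃ q : Fin N × Bool, h '' (F q ∩ S) := by
    intro x hx
    rw [mem_sphere_zero_iff_norm] at hx
    obtain ⟨i, -, hi⟩ := Finset.exists_max_image (Finset.univ : Finset (Fin N))
      (fun j => |x j|) ⟨⟨0, by omega⟩, Finset.mem_univ _⟩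
    set m := |x i| with hm
    have hsum := sum_sq_eq_one x hx
    have hNpos : (0:ℝ) < N := by
      have : (0:ℕ) < N := by omega
      exact_mod_cast this
    have hNm : 1 ≤ (N:ℝ) * m^2 := by
      have : ∑ j, x j ^2 ≤ ∑ _j : Fin N, m^2 := by
        apply Finset.sum_le_sum
        intro j _
        have := hi j (Finset.mem_univ j)
        nlinarith [abs_nonneg (x j), sq_abs (x j), sq_abs (x i)]
      rw [hsum] at this
      simpa [Finset.sum_const, Finset.card_univ, nsmul_eq_mul] using this
    have hm0 : 0 < m := by
      rcases (abs_nonneg (x i)).lt_or_eq with hlt | heq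
      · exact hlt
      · exfalso; rw [hm, ← heq] at hNm; norm_num at hNm
    have hm1 : m ≤ 1 := by
      nlinarith [Finset.single_le_sum (f := fun j => x j ^2) (fun j _ => sq_nonneg (x j))
        (Finset.mem_univ i), sq_abs (x i)]
    have hinvm : m⁻¹ ≤ (N:ℝ) := by
      rw [inv_eq_one_div, div_le_iff₀ hm0]
      nlinarith
    set y : (EuclideanSpace ℝ (Fin N)) := m⁻¹ • x with hy
    have hyn : ‖y‖ = m⁻¹ := by
      rw [hy, norm_smul, Real.norm_eq_abs, abs_of_pos (inv_pos.mpr hm0), hx, mul_one]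
    set b : Bool := if 0 ≤ x i then true else false with hb
    have hyi : y i = (if b then (1:ℝ) else -1) := by
      have hyival : y i = m⁻¹ * x i := by rw [hy]; simp [smul_eq_mul]
      by_cases hpos : 0 ≤ x i
      · have hb' : b = true := by rw [hb, if_pos hpos]
        have hxv : x i = m := by rw [hm, abs_of_nonneg hpos]
        rw [hb', if_pos rfl, hyival, hxv, inv_mul_cancel₀ hm0.ne']
      · have hb' : b = false := by rw [hb, if_neg hpos]
        have hxv : x i = -m := by rw [hm, abs_of_neg (lt_of_not_ge hpos), neg_neg]
        rw [hb', hyival, hxv]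
        simp [inv_mul_cancel₀ hm0.ne']
    refine Set.mem_iUnion.mpr ⟨⟨i, b⟩, ?_⟩
    have hsub : (y - c (i,b)) i = y i - (if b then (1:ℝ) else -1) := by
      simp only [hc, PiLp.sub_apply, PiLp.smul_apply, smul_eq_mul, EuclideanSpace.single_apply,
        if_pos rfl]
      cases b <;> simp
    have hvmem : y - c (i, b) ∈ V i := by
      rw [hV]
      rw [Submodule.mem_orthogonal_singleton_iff_inner_right]
      have hinner : (inner ℝ (EuclideanSpace.single i 1 : (EuclideanSpace ℝ (Fin N))) (y - c (i, b)) : ℝ)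
          = (y - c (i,b)) i := by
        rw [EuclideanSpace.inner_single_left]; simp
      rw [hinner, hsub, hyi, sub_self]
    refine ⟨y, ⟨⟨⟨y - c (i, b), hvmem⟩, ?_, by simp⟩, ?_⟩, ?_⟩
    · rw [mem_closedBall_zero_iff]
      have hnn : ‖(⟨y - c (i,b), hvmem⟩ : V i)‖ = ‖y - c (i,b)‖ := rfl
      rw [hnn]
      have hcn : ‖c (i, b)‖ = 1 := by
        rw [hc]
        simp only [norm_smul, Real.norm_eq_abs]
        rw [EuclideanSpace.norm_single]
        cases b <;> norm_num
      calc ‖y - c (i,b)‖ ≤ ‖y‖ + ‖c (i,b)‖ := norm_sub_le _ _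
        _ ≤ (N:ℝ) + 1 := by rw [hyn, hcn]; linarith [hinvm]
    · rw [hS, Set.mem_setOf_eq, hyn, inv_eq_one_div, le_div_iff₀ hm0]
      linarith
    · rw [hh]
      simp only
      rw [hyn, inv_inv, hy, smul_smul, mul_inv_cancel₀ hm0.ne', one_smul]
  have hmono := measure_mono (μ := μH[d]) cover
  refine lt_of_le_of_lt (hmono.trans (measure_iUnion_le _)) ?_
  rw [tsum_fintype]
  apply ENNReal.sum_lt_top.mpr
  intro q _
  have hlip : LipschitzOnWith 2 h (F q ∩ S) := lip_radial.mono Set.inter_subset_right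
  refine lt_of_le_of_lt (hlip.hausdorffMeasure_image_le hd0) ?_
  apply ENNReal.mul_lt_top
  · exact ENNReal.rpow_lt_top_of_nonneg hd0 ENNReal.coe_ne_top
  refine lt_of_le_of_lt (measure_mono (Set.inter_subset_left)) ?_
  have hiso : Isometry (fun v : V q.1 => (v : (EuclideanSpace ℝ (Fin N))) + c q) :=
    by have := (isometry_add_right (c q)).comp (isometry_subtype_coe (s := ((V q.1 : Submodule ℝ (EuclideanSpace ℝ (Fin N))) : Set (EuclideanSpace ℝ (Fin N))))); exact this
  rw [hF]
  simp only
  rw [hiso.hausdorffMeasure_image (Or.inl hd0)]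
  haveI : Fact (finrank ℝ (EuclideanSpace ℝ (Fin N)) = (N - 1) + 1) := ⟨by
    rw [finrank_euclideanSpace_fin]; omega⟩
  have hfr : finrank ℝ (V q.1) = N - 1 := by
    rw [hV]
    refine Submodule.finrank_orthogonal_span_singleton ?_
    intro hcon
    have := congrArg (fun z : (EuclideanSpace ℝ (Fin N)) => z q.1) hcon
    simp [EuclideanSpace.single_apply] at this
  have hcast : ((N - 1 : ℕ) : ℝ) = d := by
    rw [hd]; push_cast [Nat.cast_sub (by omega : 1 ≤ N)]; ring
  haveI : (μH[d] : Measure (V q.1)).IsAddHaarMeasure := by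
    have := isAddHaarMeasure_hausdorffMeasure (E := V q.1)
    rwa [hfr, hcast] at this
  exact (isCompact_closedBall (0 : V q.1) (N+1)).measure_lt_top

lemma hasDerivAt_p (rho rho' : ℝ → ℝ)
    (hd : ∀ r > (0:ℝ), HasDerivAt rho (rho' r) r) :
    ∀ s > (0:ℝ), HasDerivAt (fun s => rho (Real.sqrt s) / Real.sqrt s)
      ((rho' (Real.sqrt s) * Real.sqrt s - rho (Real.sqrt s)) / (2 * s * Real.sqrt s)) s := by
  intro s hs
  have hrs : (0:ℝ) < Real.sqrt s := Real.sqrt_pos.mpr hs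
  have h4 : Real.sqrt s * Real.sqrt s = s := Real.mul_self_sqrt hs.le
  have h1 : HasDerivAt Real.sqrt (1 / (2 * Real.sqrt s)) s := Real.hasDerivAt_sqrt hs.ne'
  have h2 : HasDerivAt (fun t => rho (Real.sqrt t)) (rho' (Real.sqrt s) * (1 / (2 * Real.sqrt s))) s :=
    (hd _ hrs).comp s h1
  have h3 := h2.div h1 hrs.ne'
  have key : ∀ r : ℝ, 0 < r →
      (rho' r * (1 / (2 * r)) * r - rho r * (1 / (2 * r))) / r ^ 2
        = (rho' r * r - rho r) / (2 * (r * r) * r) := by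
    intro r hr; field_simp
  rw [key _ hrs, h4] at h3; exact h3

lemma diff_p1 (rho rho' rho'' : ℝ → ℝ)
    (hd : ∀ r > (0:ℝ), HasDerivAt rho (rho' r) r)
    (hd2 : ∀ r > (0:ℝ), HasDerivAt rho' (rho'' r) r) :
    ∀ s > (0:ℝ), DifferentiableAt ℝ
      (fun s => (rho' (Real.sqrt s) * Real.sqrt s - rho (Real.sqrt s)) / (2 * s * Real.sqrt s)) s := by
  intro s hs
  have hrs : (0:ℝ) < Real.sqrt s := Real.sqrt_pos.mpr hs
  have hsq : DifferentiableAt ℝ Real.sqrt s := (Real.hasDerivAt_sqrt hs.ne').differentiableAt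
  have h0 : DifferentiableAt ℝ (fun t => rho (Real.sqrt t)) s :=
    ((hd _ hrs).differentiableAt).comp s hsq
  have h1 : DifferentiableAt ℝ (fun t => rho' (Real.sqrt t)) s :=
    ((hd2 _ hrs).differentiableAt).comp s hsq
  have hnum : DifferentiableAt ℝ
      (fun t => rho' (Real.sqrt t) * Real.sqrt t - rho (Real.sqrt t)) s :=
    (h1.mul hsq).sub h0
  have hden : DifferentiableAt ℝ (fun t => 2 * t * Real.sqrt t) s :=
    ((differentiableAt_id.const_mul 2).mul hsq)
  exact hnum.div hden (by positivity)

end Stmt19Aux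

open Stmt19Aux

/-- For `ξ(x) = ρ(|x|)(a·x)/|x|`, the quantity `|D²ξ|² + τ|Dξ|²` on the unit sphere is
`P + Q(a·x)²`; consequently it integrates to zero against any `ψ` that is orthogonal
to constants and to all `(b·x)²` on the sphere. -/
theorem stmt_19 (N : ℕ) (hN : 2 ≤ N) (tau : ℝ) (htau : 0 < tau)
    (a : EuclideanSpace ℝ (Fin N)) (rho rho' rho'' : ℝ → ℝ)
    (hrho : ContDiff ℝ 2 rho)
    (hd : ∀ r > (0:ℝ), HasDerivAt rho (rho' r) r)
    (hd2 : ∀ r > (0:ℝ), HasDerivAt rho' (rho'' r) r)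
    (xi : EuclideanSpace ℝ (Fin N) → ℝ)
    (hxi : ∀ x ≠ 0, xi x = rho ‖x‖ * (inner ℝ a x : ℝ) / ‖x‖) :
    ∃ P Q : ℝ,
      (∀ x : EuclideanSpace ℝ (Fin N), ‖x‖ = 1 →
        hessFrobSq xi x + tau * gradSq xi x = P + Q * (inner ℝ a x : ℝ) ^ 2) ∧
      ∀ ψ : EuclideanSpace ℝ (Fin N) → ℝ, ContDiff ℝ (⊤ : ℕ∞) ψ →
        (∫ x in sphere (0 : EuclideanSpace ℝ (Fin N)) 1, ψ x ∂(μH[(N : ℝ) - 1])) = 0 →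
        (∀ b : EuclideanSpace ℝ (Fin N),
          (∫ x in sphere (0 : EuclideanSpace ℝ (Fin N)) 1,
            (inner ℝ b x : ℝ) ^ 2 * ψ x ∂(μH[(N : ℝ) - 1])) = 0) →
        (∫ x in sphere (0 : EuclideanSpace ℝ (Fin N)) 1,
          ψ x * (hessFrobSq xi x + tau * gradSq xi x) ∂(μH[(N : ℝ) - 1])) = 0 := by
  set p : ℝ → ℝ := fun s => rho (Real.sqrt s) / Real.sqrt s with hpdef
  set p1 : ℝ → ℝ :=
    fun s => (rho' (Real.sqrt s) * Real.sqrt s - rho (Real.sqrt s)) / (2 * s * Real.sqrt s)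
    with hp1def
  have hp : ∀ s > (0:ℝ), HasDerivAt p (p1 s) s := hasDerivAt_p rho rho' hd
  have hp2 : ∀ s > (0:ℝ), HasDerivAt p1 (deriv p1 s) s :=
    fun s hs => (diff_p1 rho rho' rho'' hd hd2 s hs).hasDerivAt
  have hxi' : ∀ y : EuclideanSpace ℝ (Fin N), y ≠ 0 → xi y = p (‖y‖^2) * (inner ℝ a y : ℝ) := by
    intro y hy
    rw [hxi y hy, hpdef]
    simp only [Real.sqrt_sq (norm_nonneg y)]
    rw [mul_div_right_comm]
  have hder := derivs a p p1 (deriv p1) hp hp2 xi hxi'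
  set c0 : ℝ := p 1 with hc0
  set c1 : ℝ := 2 * p1 1 with hc1
  set c2 : ℝ := 4 * deriv p1 1 with hc2
  set A : ℝ := ∑ i, a i ^ 2 with hA
  set P : ℝ := 2*c1^2*A + tau*(c0^2*A) with hP
  set Q : ℝ := (c2^2 + 6*c1*c2 + (N+6)*c1^2) + tau*(2*c0*c1 + c1^2) with hQ
  have hpt : ∀ x : EuclideanSpace ℝ (Fin N), ‖x‖ = 1 →
      hessFrobSq xi x + tau * gradSq xi x = P + Q * (inner ℝ a x : ℝ) ^ 2 := by
    intro x hx
    have hS : ∑ i, x i ^ 2 = 1 := sum_sq_eq_one x hx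
    have hT : ∑ i, a i * x i = (inner ℝ a x : ℝ) := by
      simp [PiLp.inner_apply, RCLike.inner_apply, conj_trivial]
      exact Finset.sum_congr rfl fun i _ => mul_comm _ _
    have hgrad : gradSq xi x = c0^2 * A + (2*c0*c1 + c1^2) * (inner ℝ a x : ℝ)^2 := by
      have e : gradSq xi x = ∑ i, (c0 * a i + (c1 * (inner ℝ a x : ℝ)) * x i)^2 := by
        apply Finset.sum_congr rfl
        intro i _
        rw [(hder x hx).1 i, hc0, hc1]
      rw [e, algebra1 c0 c1 (inner ℝ a x : ℝ) x a hS hT, hA]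
    have hhess : hessFrobSq xi x
        = 2*c1^2*A + (c2^2 + 6*c1*c2 + (N+6)*c1^2) * (inner ℝ a x : ℝ)^2 := by
      have e : hessFrobSq xi x = ∑ i, ∑ j,
          (c1 * x i * a j + c1 * a i * x j + c2*(inner ℝ a x : ℝ)*x i*x j
            + c1*(inner ℝ a x : ℝ)*(if i = j then 1 else 0))^2 := by
        apply Finset.sum_congr rfl
        intro i _
        apply Finset.sum_congr rfl
        intro j _
        rw [(hder x hx).2 i j, hc1, hc2]
      rw [e, algebra2 c1 c2 (inner ℝ a x : ℝ) x a hS hT, hA]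
    rw [hhess, hgrad, hP, hQ]
    ring
  refine ⟨P, Q, hpt, ?_⟩
  intro ψ hψ h0 hb
  have hfin := sphere_hausdorff_lt_top N hN
  haveI : IsFiniteMeasure
      ((μH[(N:ℝ)-1] : Measure (EuclideanSpace ℝ (Fin N))).restrict (sphere 0 1)) :=
    ⟨by rw [Measure.restrict_apply_univ]; exact hfin⟩
  have hcont : Continuous ψ := hψ.continuous
  have hconta : Continuous (fun x : EuclideanSpace ℝ (Fin N) => (inner ℝ a x : ℝ)^2 * ψ x) :=
    (((innerSL ℝ a).continuous).pow 2).mul hcont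
  have hInt1 : IntegrableOn ψ (sphere (0 : EuclideanSpace ℝ (Fin N)) 1) μH[(N:ℝ)-1] := by
    obtain ⟨C, hC⟩ :=
      (isCompact_sphere (0 : EuclideanSpace ℝ (Fin N)) 1).exists_bound_of_continuousOn
        hcont.continuousOn
    exact (integrable_const C).mono' hcont.aestronglyMeasurable.restrict
      ((ae_restrict_iff' isClosed_sphere.measurableSet).mpr (ae_of_all _ hC))
  have hInt2 : IntegrableOn (fun x : EuclideanSpace ℝ (Fin N) => (inner ℝ a x : ℝ)^2 * ψ x)
      (sphere (0 : EuclideanSpace ℝ (Fin N)) 1) μH[(N:ℝ)-1] := by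
    obtain ⟨C, hC⟩ :=
      (isCompact_sphere (0 : EuclideanSpace ℝ (Fin N)) 1).exists_bound_of_continuousOn
        hconta.continuousOn
    exact (integrable_const C).mono' hconta.aestronglyMeasurable.restrict
      ((ae_restrict_iff' isClosed_sphere.measurableSet).mpr (ae_of_all _ hC))
  have hcong : Set.EqOn (fun x => ψ x * (hessFrobSq xi x + tau * gradSq xi x))
      (fun x : EuclideanSpace ℝ (Fin N) => P * ψ x + Q * ((inner ℝ a x : ℝ)^2 * ψ x))
      (sphere (0 : EuclideanSpace ℝ (Fin N)) 1) := by
    intro x hx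
    simp only
    rw [hpt x (mem_sphere_zero_iff_norm.mp hx)]
    ring
  rw [setIntegral_congr_fun isClosed_sphere.measurableSet hcong,
    integral_add (hInt1.const_mul P) (hInt2.const_mul Q),
    integral_const_mul, integral_const_mul, h0, hb a]
  ring
end
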